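/- Let (x,y) : [0,T] → ℝ² be a differentiable solution of x' = max(x² − y, 0), y' = x with H(x(0), y(0)) < 0, where H(x,y) = (1/2) e^{−2y} (y − x² + 1/2). Then for all t ∈ [0,T]: y(t) ≤ x(t)² − 1/2 (in particular y(t) < x(t)², so the set {y ≤ x²} is invariant along such solutions and the trajectory never enters the critical manifold C₀,₂), H(x(t), y(t)) = H(x(0), y(0)), and x'(t) ≥ 1/2; consequently x(t) ≥ x(0) + t/2 for all t ∈ [0,T], so x grows without bound along the forward trajectory. -/

import Mathlib

/-!
On the sublevel set `{H < 0} = {y < x² - 1/2}` the trajectory lies below the critical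
manifold, where the field is `(x² - y, x)` and `H` is a first integral. A comparison with the
slowly increasing barrier `H(0) + ε t` shows that `H` cannot climb to `0`, so the trajectory
never leaves `{H < 0}`. There `x' = x² - y ≥ 1/2`, which gives the linear growth of `x`.
-/

/-- The constant of motion `H(x,y) = (1/2) e^{-2y} (y - x² + 1/2)` of the
chart-`K₂` canard system. -/
noncomputable def canardH (p : ℝ × ℝ) : ℝ :=
  (1 / 2) * Real.exp (-2 * p.2) * (p.2 - p.1 ^ 2 + 1 / 2)

open Set

theorem canardH_neg_iff (p : ℝ × ℝ) : canardH p < 0 ↔ p.2 < p.1 ^ 2 - 1 / 2 := by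
  have hexp := Real.exp_pos (-2 * p.2)
  rw [canardH, mul_neg_iff]
  constructor
  · rintro (⟨-, h⟩ | ⟨h, -⟩) <;> nlinarith
  · intro h
    exact Or.inl ⟨by positivity, by linarith⟩

theorem HasDerivAt.canardH_comp {x y : ℝ → ℝ} {u v t : ℝ} (hx : HasDerivAt x u t)
    (hy : HasDerivAt y v t) :
    HasDerivAt (fun s => canardH (x s, y s))
      (Real.exp (-2 * y t) * (v * (x t ^ 2 - y t) - x t * u)) t := by
  have h := ((hy.const_mul (-2)).exp.const_mul (1 / 2 : ℝ)).mul
    ((hy.sub (hx.pow 2)).add_const (1 / 2 : ℝ))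
  refine h.congr_deriv ?_
  simp only [Pi.sub_apply, Pi.pow_apply]
  ring

theorem image_lt_of_deriv_right_nonpos_of_lt {f f' : ℝ → ℝ} {a b c : ℝ}
    (hf : ContinuousOn f (Icc a b)) (hf' : ∀ s ∈ Ico a b, HasDerivWithinAt f (f' s) (Ici s) s)
    (ha : f a < c) (hbound : ∀ s ∈ Ico a b, f s < c → f' s ≤ 0) :
    ∀ s ∈ Icc a b, f s < c := by
  intro s hs
  have hab : 0 ≤ b - a := by linarith [hs.1, hs.2]
  -- the barrier `f a + ε (r - a)` stays below `c` and its slope `ε > 0` beats `f'` at contact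
  set ε := (c - f a) / (b - a + 1)
  have hε : 0 < ε := div_pos (by linarith) (by linarith)
  have hB : ∀ r ∈ Icc a b, f a + ε * (r - a) < c := by
    intro r hr
    have : ε * (b - a + 1) = c - f a := div_mul_cancel₀ _ (by linarith)
    nlinarith [hr.2]
  have hB' (r : ℝ) : HasDerivAt (fun r => f a + ε * (r - a)) ε r := by
    simpa using (((hasDerivAt_id r).sub_const a).const_mul ε).const_add (f a)
  have hle := image_le_of_deriv_right_lt_deriv_boundary hf hf' (by simp) hB'
    (fun r hr hfr => (hbound r hr (hfr ▸ hB r (Ico_subset_Icc_self hr))).trans_lt hε) hs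
  exact hle.trans_lt (hB s hs)

theorem canard_negative_level_unbounded_general
    (T : ℝ) (x y : ℝ → ℝ)
    (hx : ∀ t ∈ Set.Icc (0 : ℝ) T, HasDerivAt x (max ((x t) ^ 2 - y t) 0) t)
    (hy : ∀ t ∈ Set.Icc (0 : ℝ) T, HasDerivAt y (x t) t)
    (h0 : canardH (x 0, y 0) < 0) :
    ∀ t ∈ Set.Icc (0 : ℝ) T,
      y t ≤ (x t) ^ 2 - 1 / 2 ∧
      canardH (x t, y t) = canardH (x 0, y 0) ∧
      1 / 2 ≤ max ((x t) ^ 2 - y t) 0 ∧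
      x 0 + t / 2 ≤ x t := by
  set G : ℝ → ℝ := fun t => canardH (x t, y t)
  have hG' (t : ℝ) (ht : t ∈ Icc 0 T) := (hx t ht).canardH_comp (hy t ht)
  have hGc : ContinuousOn G (Icc 0 T) := fun t ht => (hG' t ht).continuousAt.continuousWithinAt
  have hG'_zero : ∀ t, y t ≤ x t ^ 2 →
      Real.exp (-2 * y t) * (x t * (x t ^ 2 - y t) - x t * max (x t ^ 2 - y t) 0) = 0 := by
    intro t ht
    rw [max_eq_left (by linarith)]
    ring
  have hGneg : ∀ t ∈ Icc 0 T, G t < 0 :=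
    image_lt_of_deriv_right_nonpos_of_lt hGc
      (fun t ht => (hG' t (Ico_subset_Icc_self ht)).hasDerivWithinAt) h0
      (fun t _ ht => (hG'_zero t (by linarith [(canardH_neg_iff _).1 ht])).le)
  have hbelow : ∀ t ∈ Icc 0 T, y t ≤ x t ^ 2 - 1 / 2 :=
    fun t ht => ((canardH_neg_iff _).1 (hGneg t ht)).le
  have hspeed : ∀ t ∈ Icc 0 T, 1 / 2 ≤ max (x t ^ 2 - y t) 0 :=
    fun t ht => le_max_of_le_left (by linarith [hbelow t ht])
  have hconst := constant_of_has_deriv_right_zero hGc fun t ht => by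
    simpa only [hG'_zero t (by linarith [hbelow t (Ico_subset_Icc_self ht)])]
      using (hG' t (Ico_subset_Icc_self ht)).hasDerivWithinAt
  have hgrowth := image_le_of_deriv_right_le_deriv_boundary
    (f := fun t => x 0 + t / 2) (f' := fun _ => 1 / 2) (by fun_prop)
    (fun t _ => (((hasDerivAt_id t).div_const 2).const_add (x 0)).hasDerivWithinAt) (by simp)
    (fun t ht => (hx t ht).continuousAt.continuousWithinAt)
    (fun t ht => (hx t (Ico_subset_Icc_self ht)).hasDerivWithinAt)
    (fun t ht => hspeed t (Ico_subset_Icc_self ht))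
  exact fun t ht => ⟨hbelow t ht, hconst t ht, hspeed t ht, hgrowth ht⟩

/-- Along any solution of the chart-`K₂` reduced canard system
`x' = max(x² - y, 0)`, `y' = x` with `H(x 0, y 0) < 0`, one has for all
`t ∈ [0,T]`: `y t ≤ (x t)² - 1/2` (so the trajectory never enters `C₀,₂`),
`H` is conserved, the speed `x' = max(x² - y, 0)` is at least `1/2`, and hence
`x t ≥ x 0 + t/2`, so `x` grows without bound. -/
theorem canard_negative_level_unbounded
    (T : ℝ) (hT : 0 ≤ T) (x y : ℝ → ℝ)
    (hx : ∀ t ∈ Set.Icc (0 : ℝ) T, HasDerivAt x (max ((x t) ^ 2 - y t) 0) t)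
    (hy : ∀ t ∈ Set.Icc (0 : ℝ) T, HasDerivAt y (x t) t)
    (h0 : canardH (x 0, y 0) < 0) :
    ∀ t ∈ Set.Icc (0 : ℝ) T,
      y t ≤ (x t) ^ 2 - 1 / 2 ∧
      canardH (x t, y t) = canardH (x 0, y 0) ∧
      1 / 2 ≤ max ((x t) ^ 2 - y t) 0 ∧
      x 0 + t / 2 ≤ x t :=
  canard_negative_level_unbounded_general T x y hx hy h0
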